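/- Let G be an inner product on the three-dimensional Heisenberg Lie algebra 𝔤. Then Rc_G − 3R_G · Id is a derivation of 𝔤, i.e. δ(Rc_G − 3R_G·Id) = 0. -/

import Mathlib

open Matrix

namespace RFN

variable {n : ℕ}

/-- Bracket determined by structure constants: `[e i, e j] = ∑ k, c i j k • e k`. -/
def bra (c : Fin n → Fin n → Fin n → ℝ) (x y : Fin n → ℝ) : Fin n → ℝ :=
  fun k => ∑ i, ∑ j, x i * y j * c i j k

/-- `c` is a family of structure constants of a Lie algebra. -/
def IsLieSC (c : Fin n → Fin n → Fin n → ℝ) : Prop :=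
  (∀ i j k, c i j k = - c j i k) ∧
  ∀ x y z, bra c (bra c x y) z + bra c (bra c y z) x + bra c (bra c z x) y = 0

def adIter (c : Fin n → Fin n → Fin n → ℝ) (v : ℕ → Fin n → ℝ) :
    ℕ → (Fin n → ℝ) → (Fin n → ℝ)
  | 0, x => x
  | m + 1, x => bra c (v m) (adIter c v m x)

/-- Nilpotency of the Lie algebra with structure constants `c`. -/
def IsNilpotentSC (c : Fin n → Fin n → Fin n → ℝ) : Prop :=
  ∃ N : ℕ, ∀ v x, adIter c v N x = 0

/-- Inner product of vectors with respect to the metric matrix `G`. -/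
def gdot (G : Matrix (Fin n) (Fin n) ℝ) (x y : Fin n → ℝ) : ℝ :=
  ∑ i, ∑ j, x i * G i j * y j

/-- Components of the Ricci bilinear form of the invariant metric `G`:
`Ric_G(x,y) = -(1/2) Σ G([x,e_i],[y,e_j])G^{ij} + (1/4) Σ G^{ip}G^{jq}G([e_i,e_j],x)G([e_p,e_q],y)`. -/
noncomputable def Ricm (c : Fin n → Fin n → Fin n → ℝ) (G : Matrix (Fin n) (Fin n) ℝ) :
    Matrix (Fin n) (Fin n) ℝ :=
  Matrix.of fun a b =>
    -(1/2) * (∑ i, ∑ j, G⁻¹ i j * gdot G (c a i) (c b j))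
    + (1/4) * (∑ i, ∑ j, ∑ p, ∑ q, G⁻¹ i p * G⁻¹ j q *
        (∑ k, c i j k * G k a) * (∑ l, c p q l * G l b))

/-- Scalar curvature `R_G = -(1/4)|[·,·]|²_G`. -/
noncomputable def scalR (c : Fin n → Fin n → Fin n → ℝ) (G : Matrix (Fin n) (Fin n) ℝ) : ℝ :=
  -(1/4) * (∑ i, ∑ j, ∑ p, ∑ q, G⁻¹ i p * G⁻¹ j q * gdot G (c i j) (c p q))

/-- Ricci endomorphism `Rc_G = G⁻¹ Ric_G`. -/
noncomputable def Rc (c : Fin n → Fin n → Fin n → ℝ) (G : Matrix (Fin n) (Fin n) ℝ) :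
    Matrix (Fin n) (Fin n) ℝ := G⁻¹ * Ricm c G

/-- `δ(A)(e_i,e_j) = A[e_i,e_j] - [A e_i, e_j] - [e_i, A e_j]` (components). -/
def deltaE (c : Fin n → Fin n → Fin n → ℝ) (A : Matrix (Fin n) (Fin n) ℝ) :
    Fin n → Fin n → Fin n → ℝ :=
  fun i j k => (∑ l, A k l * c i j l) - (∑ l, A l i * c l j k) - (∑ l, A l j * c i l k)

/-- The inner product on `Λ²𝔤*⊗𝔤` induced by `G` (full sum over ordered pairs). -/
noncomputable def tinner (G : Matrix (Fin n) (Fin n) ℝ) (μ ν : Fin n → Fin n → Fin n → ℝ) : ℝ :=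
  ∑ i, ∑ j, ∑ p, ∑ q, G⁻¹ i p * G⁻¹ j q * gdot G (μ i j) (ν p q)

/-- The (Hilbert–Schmidt) inner product of endomorphisms induced by `G`. -/
noncomputable def einner (G : Matrix (Fin n) (Fin n) ℝ) (A B : Matrix (Fin n) (Fin n) ℝ) : ℝ :=
  ∑ i, ∑ j, G⁻¹ i j * gdot G (fun k => A k i) (fun k => B k j)

/-- The inner product of bilinear forms induced by `G`. -/
noncomputable def binner (G : Matrix (Fin n) (Fin n) ℝ) (S T : Matrix (Fin n) (Fin n) ℝ) : ℝ :=
  ∑ i, ∑ j, ∑ p, ∑ q, G⁻¹ i p * G⁻¹ j q * S i j * T p q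

/-- `|Ric_G|²`. -/
noncomputable def ric2 (c : Fin n → Fin n → Fin n → ℝ) (G : Matrix (Fin n) (Fin n) ℝ) : ℝ :=
  binner G (Ricm c G) (Ricm c G)

/-- The functional `W₊(G,τ) = τ R_G + τ² |Ric_G|²`. -/
noncomputable def Wplus (c : Fin n → Fin n → Fin n → ℝ) (G : Matrix (Fin n) (Fin n) ℝ) (τ : ℝ) : ℝ :=
  τ * scalR c G + τ ^ 2 * ric2 c G

/-- Structure constants of the 3-dimensional Heisenberg Lie algebra: `[e₀,e₁] = e₂`, `e₂` central. -/
def heis : Fin 3 → Fin 3 → Fin 3 → ℝ := fun i j k =>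
  if i = 0 ∧ j = 1 ∧ k = 2 then 1 else if i = 1 ∧ j = 0 ∧ k = 2 then -1 else 0

end RFN

open RFN Matrix

/-! Every bracket of the Heisenberg algebra lies in its centre `ℝ e₂`. An endomorphism `A` is
therefore a derivation exactly when it preserves the centre and acts on it by `A₀₀ + A₁₁`. A direct
computation gives `Rc_G e₂ = -R_G e₂` and `Rc_G eᵢ ≡ R_G eᵢ` modulo the centre for `i = 0, 1`, so
`A = Rc_G - 3R_G` acts by `-2R_G` on the quotient and by `-4R_G` on the centre. -/

namespace RFN

theorem deltaE_heis_eq_zero_iff (A : Matrix (Fin 3) (Fin 3) ℝ) :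
    deltaE heis A = 0 ↔ A 0 2 = 0 ∧ A 1 2 = 0 ∧ A 2 2 = A 0 0 + A 1 1 := by
  constructor
  · intro h
    have h012 := congrFun (congrFun (congrFun h 0) 1) 2
    have h022 := congrFun (congrFun (congrFun h 0) 2) 2
    have h122 := congrFun (congrFun (congrFun h 1) 2) 2
    simp [deltaE, heis] at h012 h022 h122
    refine ⟨?_, ?_, ?_⟩ <;> linarith
  · rintro ⟨h02, h12, h22⟩
    funext i j k
    fin_cases i <;> fin_cases j <;> fin_cases k <;>
      simp [deltaE, heis, h02, h12, h22]

section

variable (G : Matrix (Fin 3) (Fin 3) ℝ)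

theorem scalR_heis :
    scalR heis G = -(1/2) * (G⁻¹ 0 0 * G⁻¹ 1 1 - G⁻¹ 0 1 * G⁻¹ 1 0) * G 2 2 := by
  simp [scalR, gdot, heis, Fin.sum_univ_three]
  ring

theorem Ricm_heis_apply (a b : Fin 3) :
    Ricm heis G a b = -(1/2) * G 2 2 * ∑ i, ∑ j, G⁻¹ i j * heis a i 2 * heis b j 2
      + (1/2) * (G⁻¹ 0 0 * G⁻¹ 1 1 - G⁻¹ 0 1 * G⁻¹ 1 0) * G 2 a * G 2 b := by
  fin_cases a <;> fin_cases b <;>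
    simp [Ricm, gdot, heis, Fin.sum_univ_three] <;> ring

theorem Rc_heis_apply (a b : Fin 3) :
    Rc heis G a b = -(1/2) * G 2 2 *
        ∑ k, ∑ i, ∑ j, G⁻¹ a k * G⁻¹ i j * heis k i 2 * heis b j 2
      + (1/2) * (G⁻¹ 0 0 * G⁻¹ 1 1 - G⁻¹ 0 1 * G⁻¹ 1 0) * (G⁻¹ * Gᵀ) a 2 * G 2 b := by
  simp only [Rc, mul_apply, Ricm_heis_apply, transpose_apply, Fin.sum_univ_three]
  ring

variable {G}

theorem Rc_heis_apply_two (hG : G.IsSymm) (hG' : IsUnit G) (a : Fin 3) :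
    Rc heis G a 2 = -scalR heis G * (1 : Matrix (Fin 3) (Fin 3) ℝ) a 2 := by
  have hinv : G⁻¹ * Gᵀ = 1 := by rw [hG.eq, G.nonsing_inv_mul (G.isUnit_iff_isUnit_det.mp hG')]
  simp [Rc_heis_apply, hinv, scalR_heis, heis]
  ring

theorem Rc_heis_apply_of_ne_two (hG : G.IsSymm) (hG' : IsUnit G) {a b : Fin 3} (ha : a ≠ 2)
    (hb : b ≠ 2) : Rc heis G a b = scalR heis G * (1 : Matrix (Fin 3) (Fin 3) ℝ) a b := by
  have hinv : G⁻¹ * Gᵀ = 1 := by rw [hG.eq, G.nonsing_inv_mul (G.isUnit_iff_isUnit_det.mp hG')]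
  have hsymm : G⁻¹ 1 0 = G⁻¹ 0 1 := hG.inv.apply 0 1
  rw [Rc_heis_apply, hinv, scalR_heis, one_apply_ne ha]
  obtain rfl | rfl : a = 0 ∨ a = 1 := by omega
  all_goals obtain rfl | rfl : b = 0 ∨ b = 1 := by omega
  all_goals
    simp [heis, Fin.sum_univ_three, hsymm, -mul_eq_zero]
    ring

end

end RFN

theorem stmt9 (G : Matrix (Fin 3) (Fin 3) ℝ) (hG : G.PosDef) :
    deltaE heis (Rc heis G - (3 * scalR heis G) • (1 : Matrix (Fin 3) (Fin 3) ℝ)) = 0 := by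
  have hsymm : G.IsSymm := isHermitian_iff_isSymm.mp hG.isHermitian
  refine (deltaE_heis_eq_zero_iff _).mpr ⟨?_, ?_, ?_⟩ <;>
    simp [Rc_heis_apply_two hsymm hG.isUnit, Rc_heis_apply_of_ne_two hsymm hG.isUnit]
  ring
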